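/- arXiv:2504.15639 — 2 statements merged into one kernel-verified Lean document; each statement's English description precedes it below -/
import Mathlib

section
/- For dimension n ≥ 2 and exponent p with 1 < p ≤ (n+2)/n, setting α = 1 - p, the discriminant Δ = (4n/(n+2))·p·(1-α) - (α - 2p(n-1)/(n+2))² is strictly positive. -/
theorem stmt_0 (n : ℕ) (hn : 2 ≤ n) (p : ℝ) (hp1 : 1 < p)
    (hp2 : p ≤ ((n : ℝ) + 2) / n) :
    (4 * (n : ℝ) / (n + 2)) * p * (1 - (1 - p))
      - ((1 - p) - 2 * p * ((n : ℝ) - 1) / (n + 2)) ^ 2 > 0 := by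
  have hN : (2:ℝ) ≤ (n:ℝ) := by exact_mod_cast hn
  have h0 : (0:ℝ) < (n:ℝ) := by linarith
  have h2 : (0:ℝ) < (n:ℝ) + 2 := by linarith
  have hpn : (n:ℝ) * p ≤ (n:ℝ) + 2 := by
    rw [le_div_iff₀ h0] at hp2; linarith
  have key : 4 * (n:ℝ) * p ^ 2 * ((n:ℝ) + 2) - ((n:ℝ) + 2 - 3 * n * p) ^ 2 > 0 := by
    nlinarith [mul_nonneg (le_of_lt (sub_pos.mpr hp1)) (sub_nonneg.mpr hpn),
      mul_pos h0 (sub_pos.mpr hp1), sq_nonneg ((n:ℝ) * p - n), sq_nonneg (p - 1),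
      mul_nonneg (mul_nonneg h0.le (le_of_lt (sub_pos.mpr hp1))) (sub_nonneg.mpr hpn)]
  have heq : (4 * (n : ℝ) / (n + 2)) * p * (1 - (1 - p))
      - ((1 - p) - 2 * p * ((n : ℝ) - 1) / (n + 2)) ^ 2
      = (4 * (n:ℝ) * p ^ 2 * ((n:ℝ) + 2) - ((n:ℝ) + 2 - 3 * n * p) ^ 2) / ((n:ℝ) + 2) ^ 2 := by
    field_simp
    ring
  rw [heq]
  exact div_pos key (by positivity)
end

section
/- Let n ≥ 2, 1 < p < p_* (p_* = ∞ if n = 2, (n+2)/(n-2) if n ≥ 3), β = 1/(p-1), ρ = e^{-|x|²/4}. Suppose a nonnegative C² function u on ℝⁿ satisfies the three integral identities: (i) ∫ρ|∇u|² + βρu² - ρu^{p+1} = 0; (ii) ∫|x|²|∇u|²ρ + [(β+1/2)|x|² - n]u²ρ - |x|²u^{p+1}ρ = 0; (iii) ∫(|x|²/4 - (n-2)/2)|∇u|²ρ + (β|x|²/4 - nβ/2)u²ρ - (|x|²/(2p+2) - n/(p+1))u^{p+1}ρ = 0. Then the combination (n/(p+1))·(i) - (1/(2(p+1)))·(ii)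 + (iii) yields ((n+2-(n-2)p)/(2p+2))∫|∇u|²ρ + ((p-1)/(4(p+1)))∫|x|²|∇u|²ρ = 0, and hence ∇u ≡ 0. -/
/-!
In the combination `n/(p+1)·(i) - 1/(2(p+1))·(ii) + (iii)` the coefficients of `u² ρ` and
`u^{p+1} ρ` vanish identically in `x`, so only the gradient terms survive, with the
coefficients `(n + 2 - (n - 2)p)/(2p + 2)` and `(p - 1)/(4(p + 1))`. Both are positive for
`1 < p < p_*`, so `∫ |∇u|² ρ = 0`, and a continuous nonnegative function with zero integral
against Lebesgue measure vanishes everywhere.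
-/

open RealInnerProductSpace MeasureTheory

section WeightedIntegrability

variable {α : Type*} [MeasurableSpace α] {μ : Measure α} {a f : α → ℝ}

theorem MeasureTheory.Integrable.of_one_add_mul (h : Integrable (fun x => (1 + a x) * f x) μ)
    (ha : AEStronglyMeasurable a μ) (ha0 : ∀ x, 0 ≤ a x) : Integrable f μ := by
  have hbound : ∀ x, ‖(1 + a x)⁻¹‖ ≤ 1 := fun x => by
    rw [norm_inv, Real.norm_of_nonneg (by linarith [ha0 x])]
    exact inv_le_one_of_one_le₀ (by linarith [ha0 x])
  have hinv : AEStronglyMeasurable (fun x => (1 + a x)⁻¹) μ :=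
    (ha.aemeasurable.const_add 1).inv.aestronglyMeasurable
  refine (h.bdd_mul hinv (.of_forall hbound)).congr (.of_forall fun x => ?_)
  have : 1 + a x ≠ 0 := by linarith [ha0 x]
  field_simp

theorem MeasureTheory.Integrable.affine_mul (h : Integrable (fun x => (1 + a x) * f x) μ)
    (ha : AEStronglyMeasurable a μ) (ha0 : ∀ x, 0 ≤ a x) (c d : ℝ) :
    Integrable (fun x => (c + d * a x) * f x) μ := by
  have hf := h.of_one_add_mul ha ha0
  have haf : Integrable (fun x => a x * f x) μ :=
    (h.fun_add (hf.const_mul (-1))).congr (.of_forall fun x => by ring)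
  exact ((hf.const_mul c).fun_add (haf.const_mul d)).congr (.of_forall fun x => by ring)

end WeightedIntegrability

theorem integral_eq_zero_of_eq_linear_combination {α : Type*} [MeasurableSpace α]
    {μ : Measure α} {F₁ F₂ F₃ H : α → ℝ} (a b c : ℝ)
    (hi₁ : Integrable F₁ μ) (hi₂ : Integrable F₂ μ) (hi₃ : Integrable F₃ μ)
    (h₁ : ∫ x, F₁ x ∂μ = 0) (h₂ : ∫ x, F₂ x ∂μ = 0)
    (h₃ : ∫ x, F₃ x ∂μ = 0)
    (hH : ∀ x, H x = a * F₁ x + b * F₂ x + c * F₃ x) : ∫ x, H x ∂μ = 0 := by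
  simp_rw [hH]
  rw [integral_add ?_ (hi₃.const_mul c), integral_add (hi₁.const_mul a) (hi₂.const_mul b),
    integral_const_mul, integral_const_mul, integral_const_mul, h₁, h₂, h₃]
  · ring
  · exact (hi₁.const_mul a).fun_add (hi₂.const_mul b)

theorem Continuous.eq_zero_of_integral_eq_zero {X : Type*} [TopologicalSpace X]
    [MeasurableSpace X] [OpensMeasurableSpace X] {μ : Measure X} [μ.IsOpenPosMeasure]
    {f : X → ℝ} (hf : Continuous f) (hf0 : 0 ≤ f) (hfi : Integrable f μ)
    (h : ∫ x, f x ∂μ = 0) : f = 0 :=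
  (hf.ae_eq_iff_eq μ continuous_const).1 ((integral_eq_zero_iff_of_nonneg hf0 hfi).1 h)

theorem add_two_sub_mul_pos_of_subcritical {n : ℕ} (hn : 2 ≤ n) {p : ℝ}
    (hp : 3 ≤ n → p < ((n : ℝ) + 2) / ((n : ℝ) - 2)) :
    0 < (n : ℝ) + 2 - ((n : ℝ) - 2) * p := by
  rcases hn.eq_or_lt with rfl | h3
  · norm_num
  · have hn2 : (0 : ℝ) < (n : ℝ) - 2 := by
      have : (3 : ℝ) ≤ n := by exact_mod_cast h3
      linarith
    linarith [(lt_div_iff₀ hn2).1 (hp h3)]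

theorem integral_combination_eq_zero {α : Type*} [MeasurableSpace α] {μ : Measure α}
    (r ρ g v w : α → ℝ) (n p : ℝ) (hp : p - 1 ≠ 0) (hp' : p + 1 ≠ 0)
    (hr : AEStronglyMeasurable r μ) (hr0 : ∀ x, 0 ≤ r x)
    (hw : Integrable (fun x => (1 + r x) * ρ x * w x) μ)
    (hg : Integrable (fun x => (1 + r x) * ρ x * g x) μ)
    (hv : Integrable (fun x => (1 + r x) * ρ x * v x) μ)
    (h₁ : ∫ x, (ρ x * g x + 1 / (p - 1) * ρ x * v x - ρ x * w x) ∂μ = 0)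
    (h₂ : ∫ x, (r x * g x * ρ x + ((1 / (p - 1) + 1 / 2) * r x - n) * v x * ρ x
        - r x * w x * ρ x) ∂μ = 0)
    (h₃ : ∫ x, ((r x / 4 - (n - 2) / 2) * g x * ρ x
        + (1 / (p - 1) * r x / 4 - n * (1 / (p - 1)) / 2) * v x * ρ x
        - (r x / (2 * p + 2) - n / (p + 1)) * w x * ρ x) ∂μ = 0) :
    (n + 2 - (n - 2) * p) / (2 * p + 2) * ∫ x, g x * ρ x ∂μ
      + (p - 1) / (4 * (p + 1)) * ∫ x, r x * g x * ρ x ∂μ = 0 := by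
  have hG := Integrable.affine_mul (by simpa only [mul_assoc] using hg) hr hr0
  have hV := Integrable.affine_mul (by simpa only [mul_assoc] using hv) hr hr0
  have hW := Integrable.affine_mul (by simpa only [mul_assoc] using hw) hr hr0
  have hA : Integrable (fun x => g x * ρ x) μ := (hG 1 0).congr (.of_forall fun x => by ring)
  have hB : Integrable (fun x => r x * g x * ρ x) μ :=
    (hG 0 1).congr (.of_forall fun x => by ring)
  rw [← integral_const_mul, ← integral_const_mul,
    ← integral_add (hA.const_mul _) (hB.const_mul _)]
  refine integral_eq_zero_of_eq_linear_combination (n / (p + 1)) (-(1 / (2 * (p + 1)))) 1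
    ?_ ?_ ?_ h₁ h₂ h₃ fun x => ?_
  · exact (((hG 1 0).fun_add (hV (1 / (p - 1)) 0)).fun_add (hW (-1) 0)).congr
      (.of_forall fun x => by ring)
  · exact (((hG 0 1).fun_add (hV (-n) (1 / (p - 1) + 1 / 2))).fun_add (hW 0 (-1))).congr
      (.of_forall fun x => by ring)
  · exact (((hG (-(n - 2) / 2) (1 / 4)).fun_add
      (hV (-(n * (1 / (p - 1)) / 2)) (1 / (p - 1) / 4))).fun_add
      (hW (n / (p + 1)) (-(1 / (2 * p + 2))))).congr (.of_forall fun x => by ring)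
  · field_simp
    ring

theorem ContDiff.continuous_gradient {F : Type*} [NormedAddCommGroup F]
    [InnerProductSpace ℝ F] [CompleteSpace F] {u : F → ℝ} {k : WithTop ℕ∞}
    (hu : ContDiff ℝ k u) (hk : k ≠ 0) : Continuous (gradient u) :=
  (InnerProductSpace.toDual ℝ F).symm.continuous.comp (hu.continuous_fderiv hk)

theorem stmt_14_general (n : ℕ) (hn : 2 ≤ n) (p : ℝ) (hp : 1 < p)
    (hp2 : 3 ≤ n → p < ((n : ℝ) + 2) / ((n : ℝ) - 2))
    (u : EuclideanSpace ℝ (Fin n) → ℝ)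
    (hu_smooth : ContDiff ℝ 2 u)
    (hint1 : Integrable (fun x : EuclideanSpace ℝ (Fin n) =>
      (1 + ‖x‖ ^ 2) * Real.exp (-‖x‖ ^ 2 / 4) * (u x) ^ (p + 1)))
    (hint2 : Integrable (fun x : EuclideanSpace ℝ (Fin n) =>
      (1 + ‖x‖ ^ 2) * Real.exp (-‖x‖ ^ 2 / 4) * ‖gradient u x‖ ^ 2))
    (hint3 : Integrable (fun x : EuclideanSpace ℝ (Fin n) =>
      (1 + ‖x‖ ^ 2) * Real.exp (-‖x‖ ^ 2 / 4) * (u x) ^ 2))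
    (hid1 : ∫ x : EuclideanSpace ℝ (Fin n),
      (Real.exp (-‖x‖ ^ 2 / 4) * ‖gradient u x‖ ^ 2
        + (1 / (p - 1)) * Real.exp (-‖x‖ ^ 2 / 4) * (u x) ^ 2
        - Real.exp (-‖x‖ ^ 2 / 4) * (u x) ^ (p + 1)) = 0)
    (hid2 : ∫ x : EuclideanSpace ℝ (Fin n),
      (‖x‖ ^ 2 * ‖gradient u x‖ ^ 2 * Real.exp (-‖x‖ ^ 2 / 4)
        + (((1 / (p - 1)) + 1 / 2) * ‖x‖ ^ 2 - n) * (u x) ^ 2 * Real.exp (-‖x‖ ^ 2 / 4)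
        - ‖x‖ ^ 2 * (u x) ^ (p + 1) * Real.exp (-‖x‖ ^ 2 / 4)) = 0)
    (hid3 : ∫ x : EuclideanSpace ℝ (Fin n),
      ((‖x‖ ^ 2 / 4 - ((n : ℝ) - 2) / 2) * ‖gradient u x‖ ^ 2 * Real.exp (-‖x‖ ^ 2 / 4)
        + ((1 / (p - 1)) * ‖x‖ ^ 2 / 4 - (n : ℝ) * (1 / (p - 1)) / 2) * (u x) ^ 2
            * Real.exp (-‖x‖ ^ 2 / 4)
        - (‖x‖ ^ 2 / (2 * p + 2) - (n : ℝ) / (p + 1)) * (u x) ^ (p + 1)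
            * Real.exp (-‖x‖ ^ 2 / 4)) = 0) :
    (((n : ℝ) + 2 - ((n : ℝ) - 2) * p) / (2 * p + 2))
        * (∫ x : EuclideanSpace ℝ (Fin n),
            ‖gradient u x‖ ^ 2 * Real.exp (-‖x‖ ^ 2 / 4))
      + ((p - 1) / (4 * (p + 1)))
        * (∫ x : EuclideanSpace ℝ (Fin n),
            ‖x‖ ^ 2 * ‖gradient u x‖ ^ 2 * Real.exp (-‖x‖ ^ 2 / 4)) = 0 ∧
    ∀ x : EuclideanSpace ℝ (Fin n), gradient u x = 0 := by
  have hr : Continuous fun x : EuclideanSpace ℝ (Fin n) => ‖x‖ ^ 2 := by fun_prop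
  have key := integral_combination_eq_zero (fun x => ‖x‖ ^ 2)
    (fun x => Real.exp (-‖x‖ ^ 2 / 4)) (fun x => ‖gradient u x‖ ^ 2) (fun x => u x ^ 2)
    (fun x => u x ^ (p + 1)) n p
    (by linarith) (by linarith) hr.aestronglyMeasurable (fun x => by positivity)
    hint1 hint2 hint3 hid1 hid2 hid3
  have hc₁ : 0 < ((n : ℝ) + 2 - ((n : ℝ) - 2) * p) / (2 * p + 2) :=
    div_pos (add_two_sub_mul_pos_of_subcritical hn hp2) (by linarith)
  have hc₂ : 0 < (p - 1) / (4 * (p + 1)) := div_pos (by linarith) (by linarith)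
  obtain ⟨hA, -⟩ := (add_eq_zero_iff_of_nonneg
    (mul_nonneg hc₁.le (integral_nonneg fun x => by positivity))
    (mul_nonneg hc₂.le (integral_nonneg fun x => by positivity))).1 key
  have hgrad := hu_smooth.continuous_gradient (by norm_num)
  have hAi := (Integrable.of_one_add_mul (by simpa only [mul_assoc] using hint2)
    hr.aestronglyMeasurable fun x => by positivity).congr (.of_forall fun x => mul_comm _ _)
  have hzero : (fun x => ‖gradient u x‖ ^ 2 * Real.exp (-‖x‖ ^ 2 / 4)) = 0 :=
    Continuous.eq_zero_of_integral_eq_zero (by fun_prop) (fun x => by positivity) hAi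
      ((mul_eq_zero.1 hA).resolve_left hc₁.ne')
  refine ⟨key, fun x => ?_⟩
  simpa [(Real.exp_pos _).ne'] using congrFun hzero x

theorem stmt_14 (n : ℕ) (hn : 2 ≤ n) (p : ℝ) (hp : 1 < p)
    (hp2 : 3 ≤ n → p < ((n : ℝ) + 2) / ((n : ℝ) - 2))
    (u : EuclideanSpace ℝ (Fin n) → ℝ) (hu_nonneg : ∀ x, 0 ≤ u x)
    (hu_smooth : ContDiff ℝ 2 u)
    (hint1 : Integrable (fun x : EuclideanSpace ℝ (Fin n) =>
      (1 + ‖x‖ ^ 2) * Real.exp (-‖x‖ ^ 2 / 4) * (u x) ^ (p + 1)))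
    (hint2 : Integrable (fun x : EuclideanSpace ℝ (Fin n) =>
      (1 + ‖x‖ ^ 2) * Real.exp (-‖x‖ ^ 2 / 4) * ‖gradient u x‖ ^ 2))
    (hint3 : Integrable (fun x : EuclideanSpace ℝ (Fin n) =>
      (1 + ‖x‖ ^ 2) * Real.exp (-‖x‖ ^ 2 / 4) * (u x) ^ 2))
    (hid1 : ∫ x : EuclideanSpace ℝ (Fin n),
      (Real.exp (-‖x‖ ^ 2 / 4) * ‖gradient u x‖ ^ 2
        + (1 / (p - 1)) * Real.exp (-‖x‖ ^ 2 / 4) * (u x) ^ 2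
        - Real.exp (-‖x‖ ^ 2 / 4) * (u x) ^ (p + 1)) = 0)
    (hid2 : ∫ x : EuclideanSpace ℝ (Fin n),
      (‖x‖ ^ 2 * ‖gradient u x‖ ^ 2 * Real.exp (-‖x‖ ^ 2 / 4)
        + (((1 / (p - 1)) + 1 / 2) * ‖x‖ ^ 2 - n) * (u x) ^ 2 * Real.exp (-‖x‖ ^ 2 / 4)
        - ‖x‖ ^ 2 * (u x) ^ (p + 1) * Real.exp (-‖x‖ ^ 2 / 4)) = 0)
    (hid3 : ∫ x : EuclideanSpace ℝ (Fin n),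
      ((‖x‖ ^ 2 / 4 - ((n : ℝ) - 2) / 2) * ‖gradient u x‖ ^ 2 * Real.exp (-‖x‖ ^ 2 / 4)
        + ((1 / (p - 1)) * ‖x‖ ^ 2 / 4 - (n : ℝ) * (1 / (p - 1)) / 2) * (u x) ^ 2
            * Real.exp (-‖x‖ ^ 2 / 4)
        - (‖x‖ ^ 2 / (2 * p + 2) - (n : ℝ) / (p + 1)) * (u x) ^ (p + 1)
            * Real.exp (-‖x‖ ^ 2 / 4)) = 0) :
    (((n : ℝ) + 2 - ((n : ℝ) - 2) * p) / (2 * p + 2))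
        * (∫ x : EuclideanSpace ℝ (Fin n),
            ‖gradient u x‖ ^ 2 * Real.exp (-‖x‖ ^ 2 / 4))
      + ((p - 1) / (4 * (p + 1)))
        * (∫ x : EuclideanSpace ℝ (Fin n),
            ‖x‖ ^ 2 * ‖gradient u x‖ ^ 2 * Real.exp (-‖x‖ ^ 2 / 4)) = 0 ∧
    ∀ x : EuclideanSpace ℝ (Fin n), gradient u x = 0 :=
  stmt_14_general n hn p hp hp2 u hu_smooth hint1 hint2 hint3 hid1 hid2 hid3
end
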